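/- Let Λ be a σ-finite measure on 𝒫 satisfying conditions (1.4) and (1.5), and suppose Λ is an infinite measure, i.e. Λ(𝒫) = ∞. Then Λ({x ∈ 𝒫 : 1/2 ≤ ⟨x,e_θ⟩ ≤ 2}) = ∞. -/

import Mathlib

open MeasureTheory ENNReal Filter

noncomputable section

/-- The space `𝒫` of nonincreasing sequences in `[-∞, ∞)` tending to `-∞`,
equipped (as a subtype of `ℕ → EReal`) with the σ-algebra generated by the coordinate maps. -/
def calP : Set (ℕ → EReal) :=
  {x | Antitone x ∧ (∀ n, x n ≠ ⊤) ∧ Tendsto x atTop (nhds ⊥)}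

/-- `e^{θ y}`, with the convention that it is `0` when `y = -∞`, even for `θ = 0`. -/
def eexp (θ : ℝ) (y : EReal) : ℝ≥0∞ :=
  if y = ⊥ then 0 else ENNReal.ofReal (Real.exp (θ * y.toReal))

/-- `⟨x, e_θ⟩ = Σ_{n ≥ 1} e^{θ x_n}` (the sequence is indexed from `0` in Lean). -/
def ip (θ : ℝ) (x : ℕ → EReal) : ℝ≥0∞ := ∑' n, eexp θ (x n)

/-- Condition (1.4): `∫ (1 ∧ x₁²) Λ(dx) < ∞`, with `1 ∧ x₁² = 1` when `x₁ = -∞`. -/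
def cond14 (Λ : Measure calP) : Prop :=
  ∫⁻ x : calP, (if x.1 0 = ⊥ then 1
    else 1 ⊓ ENNReal.ofReal ((x.1 0).toReal ^ 2)) ∂Λ < ∞

/-- Condition (1.5): `∫ (1_{x₁>1} e^{θ x₁} + Σ_{k≥2} e^{θ x_k}) Λ(dx) < ∞`. -/
def cond15 (θ : ℝ) (Λ : Measure calP) : Prop :=
  ∫⁻ x : calP, ((if (1 : EReal) < x.1 0 then eexp θ (x.1 0) else 0)
    + ∑' k, eexp θ (x.1 (k + 1))) ∂Λ < ∞

lemma measurable_eexp (θ : ℝ) : Measurable (eexp θ) := by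
  unfold eexp
  refine Measurable.ite (measurableSet_eq) measurable_const ?_
  exact ENNReal.measurable_ofReal.comp
    (Real.continuous_exp.measurable.comp (measurable_ereal_toReal.const_mul θ))

lemma measurable_coord (n : ℕ) : Measurable (fun x : calP => x.1 n) :=
  (measurable_pi_apply n).comp measurable_subtype_coe

/-- if `Λ` is an infinite (σ-finite) measure satisfying (1.4) and (1.5), then
`Λ({x : 1/2 ≤ ⟨x,e_θ⟩ ≤ 2}) = ∞`. -/
theorem stmt5 (θ : ℝ) (hθ : 0 ≤ θ) (Λ : Measure calP) [SigmaFinite Λ]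
    (h14 : cond14 Λ) (h15 : cond15 θ Λ) (hinf : Λ Set.univ = ∞) :
    Λ {x : calP | 2⁻¹ ≤ ip θ x.1 ∧ ip θ x.1 ≤ 2} = ∞ := by
  classical
  set δ : ℝ := Real.log (3/2) / (θ + 1) with hδdef
  have hlog : 0 < Real.log (3/2) := Real.log_pos (by norm_num)
  have hθ1 : 0 < θ + 1 := by linarith
  have hδpos : 0 < δ := div_pos hlog hθ1
  have hθδ : θ * δ ≤ Real.log (3/2) := by
    have h1 : θ * δ = (θ / (θ + 1)) * Real.log (3/2) := by rw [hδdef]; ring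
    rw [h1]
    calc (θ / (θ + 1)) * Real.log (3/2) ≤ 1 * Real.log (3/2) :=
          mul_le_mul_of_nonneg_right ((div_le_one hθ1).mpr (by linarith)) hlog.le
      _ = Real.log (3/2) := one_mul _
  -- functions
  set f14 : calP → ℝ≥0∞ := fun x => if x.1 0 = ⊥ then 1
    else 1 ⊓ ENNReal.ofReal ((x.1 0).toReal ^ 2) with hf14def
  set tail : calP → ℝ≥0∞ := fun x => ∑' k, eexp θ (x.1 (k + 1)) with htaildef
  have mf14 : Measurable f14 := by
    refine Measurable.ite ?_ measurable_const
      (measurable_const.inf (ENNReal.measurable_ofReal.comp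
        (((measurable_coord 0).ereal_toReal).pow_const 2)))
    exact (measurable_coord 0) (measurableSet_singleton ⊥)
  have mtail : Measurable tail :=
    Measurable.ennreal_tsum (fun k => (measurable_eexp θ).comp (measurable_coord (k + 1)))
  -- sets
  set B : Set calP := {x | x.1 0 ≠ ⊥ ∧ |(x.1 0).toReal| ≤ δ} with hBdef
  set C : Set calP := {x | tail x ≤ 4⁻¹} with hCdef
  -- Λ Bᶜ < ∞
  set c : ℝ≥0∞ := 1 ⊓ ENNReal.ofReal (δ ^ 2) with hcdef
  have hc0 : c ≠ 0 := by
    refine ne_of_gt ?_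
    rw [hcdef]
    exact lt_inf_iff.mpr ⟨zero_lt_one, ENNReal.ofReal_pos.mpr (pow_pos hδpos 2)⟩
  have hctop : c ≠ ∞ := by
    simp only [hcdef]
    exact ne_top_of_le_ne_top one_ne_top inf_le_left
  have hBc : Bᶜ ⊆ {x | c ≤ f14 x} := by
    intro x hx
    simp only [hBdef, Set.mem_compl_iff, Set.mem_setOf_eq, not_and_or, not_not, not_le] at hx
    rcases hx with hbot | habs
    · simp only [Set.mem_setOf_eq, hf14def, if_pos hbot]
      exact inf_le_left.trans le_rfl
    · have hne : x.1 0 ≠ ⊥ := by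
        intro h; rw [h] at habs; simp at habs; linarith
      simp only [Set.mem_setOf_eq, hf14def, if_neg hne, hcdef]
      refine inf_le_inf_left 1 (ENNReal.ofReal_le_ofReal ?_)
      have := sq_le_sq' (by linarith [abs_nonneg ((x.1 0).toReal), le_abs_self ((x.1 0).toReal), neg_abs_le ((x.1 0).toReal)] : -|(x.1 0).toReal| ≤ |(x.1 0).toReal|) (le_refl |(x.1 0).toReal|)
      calc δ ^ 2 ≤ |(x.1 0).toReal| ^ 2 := by
            apply pow_le_pow_left₀ hδpos.le habs.le
        _ = (x.1 0).toReal ^ 2 := sq_abs _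
  have h14' : ∫⁻ x, f14 x ∂Λ < ∞ := h14
  have hΛBc : Λ Bᶜ < ∞ := by
    refine lt_of_le_of_lt (measure_mono hBc) (lt_of_le_of_lt
      (meas_ge_le_lintegral_div mf14.aemeasurable hc0 hctop) ?_)
    exact ENNReal.div_lt_top h14'.ne hc0
  have htail_int : ∫⁻ x, tail x ∂Λ < ∞ := by
    refine lt_of_le_of_lt (lintegral_mono (fun x => ?_)) h15
    exact le_add_self
  have hΛCc : Λ Cᶜ < ∞ := by
    have hsub : Cᶜ ⊆ {x | (4 : ℝ≥0∞)⁻¹ ≤ tail x} := by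
      intro x hx
      simp only [hCdef, Set.mem_compl_iff, Set.mem_setOf_eq, not_le] at hx
      exact hx.le
    refine lt_of_le_of_lt (measure_mono hsub) (lt_of_le_of_lt
      (meas_ge_le_lintegral_div mtail.aemeasurable (by norm_num) (by norm_num)) ?_)
    exact ENNReal.div_lt_top htail_int.ne (by norm_num)
  have hsub : B ∩ C ⊆ {x : calP | 2⁻¹ ≤ ip θ x.1 ∧ ip θ x.1 ≤ 2} := by
    rintro x ⟨⟨hne, habs⟩, htl⟩
    have hsplit : ip θ x.1 = eexp θ (x.1 0) + tail x := tsum_eq_zero_add' ENNReal.summable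
    set t := (x.1 0).toReal with htdef
    have he : eexp θ (x.1 0) = ENNReal.ofReal (Real.exp (θ * t)) := by
      simp [eexp, hne]; rfl
    have hub : Real.exp (θ * t) ≤ 3/2 := by
      have h1 : θ * t ≤ θ * δ := mul_le_mul_of_nonneg_left ((le_abs_self t).trans habs) hθ
      calc Real.exp (θ*t) ≤ Real.exp (Real.log (3/2)) := Real.exp_le_exp.mpr (h1.trans hθδ)
        _ = 3/2 := Real.exp_log (by norm_num)
    have hlb : (2:ℝ)/3 ≤ Real.exp (θ * t) := by
      have hnt : -t ≤ δ := (neg_le_abs t).trans habs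
      have h1 : -(θ * δ) ≤ θ * t := by nlinarith
      have h2 : -Real.log (3/2) ≤ θ * t := le_trans (neg_le_neg hθδ) h1
      calc (2:ℝ)/3 = Real.exp (-Real.log (3/2)) := by
            rw [Real.exp_neg, Real.exp_log (by norm_num)]; norm_num
        _ ≤ Real.exp (θ*t) := Real.exp_le_exp.mpr h2
    simp only [Set.mem_setOf_eq]
    constructor
    · calc (2:ℝ≥0∞)⁻¹ = ENNReal.ofReal (2⁻¹) := by
            rw [ENNReal.ofReal_inv_of_pos (by norm_num : (0:ℝ) < 2), ENNReal.ofReal_ofNat]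
        _ ≤ ENNReal.ofReal (Real.exp (θ*t)) := ENNReal.ofReal_le_ofReal (by linarith)
        _ = eexp θ (x.1 0) := he.symm
        _ ≤ ip θ x.1 := hsplit ▸ le_self_add
    · rw [hsplit, he]
      calc ENNReal.ofReal (Real.exp (θ*t)) + tail x ≤ ENNReal.ofReal (3/2) + 4⁻¹ :=
            add_le_add (ENNReal.ofReal_le_ofReal hub) htl
        _ ≤ 2 := by
            have h4 : ((4:ℝ≥0∞))⁻¹ = ENNReal.ofReal (4⁻¹) := by
              rw [ENNReal.ofReal_inv_of_pos (by norm_num : (0:ℝ) < 4), ENNReal.ofReal_ofNat]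
            rw [h4, ← ENNReal.ofReal_add (by norm_num) (by norm_num),
              show (2:ℝ≥0∞) = ENNReal.ofReal 2 by norm_num]
            exact ENNReal.ofReal_le_ofReal (by norm_num)
  have hcover : (Set.univ : Set calP) ⊆ (B ∩ C) ∪ (Bᶜ ∪ Cᶜ) := by
    intro x _
    by_cases hB : x ∈ B
    · by_cases hC : x ∈ C
      · exact Or.inl ⟨hB, hC⟩
      · exact Or.inr (Or.inr hC)
    · exact Or.inr (Or.inl hB)
  have hBCinf : Λ (B ∩ C) = ∞ := by
    by_contra hne
    have hle : Λ Set.univ ≤ Λ (B ∩ C) + (Λ Bᶜ + Λ Cᶜ) :=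
      (measure_mono hcover).trans ((measure_union_le _ _).trans
        (add_le_add le_rfl (measure_union_le _ _)))
    rw [hinf] at hle
    exact absurd (top_le_iff.mp hle)
      (ENNReal.add_ne_top.mpr ⟨hne, ENNReal.add_ne_top.mpr ⟨hΛBc.ne, hΛCc.ne⟩⟩)
  exact top_le_iff.mp (hBCinf ▸ measure_mono hsub)
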